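/- Let Y ⊂ T⁴ = T² × T² be closed, invariant under the diagonal action of SL₂(Z), and suppose Y contains infinitely many distinct two-dimensional invariant subtori, each of the form {(z_h, z_v) : a z_h + b z_v ≡ 0 mod Z²} for integers a, b not both zero. Then Y = T⁴. -/

import Mathlib

/-!
On the circle the solutions `y'` of `b • y' = x` are `1/|b|`-dense, so the subtorus
`a • z_h + b • z_v = 0` comes within `1 / max |a| |b|` of every point of `T⁴` (solve for the
coordinate with the larger coefficient). Infinitely many distinct subtori have unbounded
coefficients, so `Y` is dense; being closed, it is everything.
-/

noncomputable def torusLin (e f g h : ℤ) (v : AddCircle (1 : ℝ) × AddCircle (1 : ℝ)) :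
    AddCircle (1 : ℝ) × AddCircle (1 : ℝ) :=
  (e • v.1 + f • v.2, g • v.1 + h • v.2)

namespace AddCircle

variable {p : ℝ} [Fact (0 < p)]

theorem exists_zsmul_eq_dist_le {b : ℤ} (hb : b ≠ 0) (x y : AddCircle p) :
    ∃ y', b • y' = x ∧ dist y y' ≤ p / |(b : ℝ)| := by
  obtain ⟨⟨r, hr⟩, hlift⟩ : ∃ r : Set.Ico 0 (0 + p), ((r : ℝ) : AddCircle p) = x - b • y :=
    ⟨_, (equivIco p 0).symm_apply_apply _⟩
  refine ⟨y + ↑(r / b), ?_, ?_⟩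
  · rw [smul_add, ← coe_zsmul, zsmul_eq_mul, mul_div_cancel₀ _ (by exact_mod_cast hb), hlift]
    abel
  · rw [dist_self_add_right]
    calc ‖((r / b : ℝ) : AddCircle p)‖ ≤ |r / b| := QuotientAddGroup.norm_mk_le_norm
      _ ≤ p / |(b : ℝ)| := by
        rw [abs_div, abs_of_nonneg hr.1]
        gcongr
        linarith [hr.2]

theorem exists_zsmul_eq_dist_le_prod {b : ℤ} (hb : b ≠ 0) (x y : AddCircle p × AddCircle p) :
    ∃ y', b • y' = x ∧ dist y y' ≤ p / |(b : ℝ)| := by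
  obtain ⟨y₁, hy₁, hd₁⟩ := exists_zsmul_eq_dist_le hb x.1 y.1
  obtain ⟨y₂, hy₂, hd₂⟩ := exists_zsmul_eq_dist_le hb x.2 y.2
  exact ⟨(y₁, y₂), Prod.ext hy₁ hy₂, max_le hd₁ hd₂⟩

end AddCircle

theorem exists_lt_max_abs_of_infinite {X : Type*} {Y : Set X} {f : ℤ → ℤ → Set X}
    {P : ℤ → ℤ → Prop} (h : {S | S ⊆ Y ∧ ∃ a b, P a b ∧ S = f a b}.Infinite) (n : ℤ) :
    ∃ a b, P a b ∧ f a b ⊆ Y ∧ n < max |a| |b| := by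
  by_contra! hsmall
  refine h (((Set.finite_Icc (-n) n).prod (Set.finite_Icc (-n) n)).image
    (fun ab => f ab.1 ab.2) |>.subset ?_)
  rintro S ⟨hSY, a, b, hab, rfl⟩
  have hmax := hsmall a b hab hSY
  exact ⟨(a, b), ⟨abs_le.1 (le_of_max_le_left hmax), abs_le.1 (le_of_max_le_right hmax)⟩, rfl⟩

variable (p : ℝ) in
def subtorus (a b : ℤ) : Set ((AddCircle p × AddCircle p) × (AddCircle p × AddCircle p)) :=
  {q | a • q.1 + b • q.2 = 0}

section

variable {p : ℝ} [Fact (0 < p)]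

theorem exists_mem_subtorus_dist_le_of_ne_zero {a : ℤ} (ha : a ≠ 0) (b : ℤ)
    (q : (AddCircle p × AddCircle p) × (AddCircle p × AddCircle p)) :
    ∃ q' ∈ subtorus p a b, dist q q' ≤ p / |(a : ℝ)| := by
  obtain ⟨x, hx, hdist⟩ := AddCircle.exists_zsmul_eq_dist_le_prod ha (-(b • q.2)) q.1
  refine ⟨(x, q.2), ?_, ?_⟩
  · simp [subtorus, hx]
  · simpa [Prod.dist_eq] using hdist

theorem exists_mem_subtorus_dist_le {a b : ℤ} (hab : ¬(a = 0 ∧ b = 0))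
    (q : (AddCircle p × AddCircle p) × (AddCircle p × AddCircle p)) :
    ∃ q' ∈ subtorus p a b, dist q q' ≤ p / max |(a : ℝ)| |(b : ℝ)| := by
  rcases le_total |b| |a| with hba | hab'
  · have ha : a ≠ 0 := by
      rintro rfl
      exact hab ⟨rfl, abs_nonpos_iff.1 (by simpa using hba)⟩
    rw [max_eq_left (by exact_mod_cast hba)]
    exact exists_mem_subtorus_dist_le_of_ne_zero ha b q
  · have hb : b ≠ 0 := by
      rintro rfl
      exact hab ⟨abs_nonpos_iff.1 (by simpa using hab'), rfl⟩
    rw [max_eq_right (by exact_mod_cast hab')]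
    obtain ⟨q', hq', hdist⟩ := exists_mem_subtorus_dist_le_of_ne_zero hb a q.swap
    refine ⟨q'.swap, ?_, ?_⟩
    · simpa [subtorus, add_comm] using hq'
    · simpa [Prod.dist_eq, max_comm] using hdist

end

theorem stmt8_general
    (Y : Set ((AddCircle (1 : ℝ) × AddCircle (1 : ℝ)) ×
              (AddCircle (1 : ℝ) × AddCircle (1 : ℝ))))
    (hclosed : IsClosed Y)
    (htori : {S : Set ((AddCircle (1 : ℝ) × AddCircle (1 : ℝ)) ×
                       (AddCircle (1 : ℝ) × AddCircle (1 : ℝ))) |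
        S ⊆ Y ∧ ∃ a b : ℤ, ¬ (a = 0 ∧ b = 0) ∧
          S = {p | a • p.1 + b • p.2 = 0}}.Infinite) :
    Y = Set.univ := by
  refine Set.eq_univ_of_forall fun q => hclosed.closure_subset ?_
  refine Metric.mem_closure_iff.2 fun ε hε => ?_
  obtain ⟨n, hn⟩ := exists_nat_gt (1 / ε)
  obtain ⟨a, b, hab, hsub, hbig⟩ := exists_lt_max_abs_of_infinite (f := subtorus 1) htori n
  obtain ⟨q', hq', hdist⟩ := exists_mem_subtorus_dist_le hab q
  have hbig' : 1 / ε < max |(a : ℝ)| |(b : ℝ)| := hn.trans (by exact_mod_cast hbig)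
  exact ⟨q', hsub hq', hdist.trans_lt ((one_div_lt ((one_div_pos.2 hε).trans hbig') hε).2 hbig')⟩

/-- If `Y ⊆ T⁴` is closed, invariant under the diagonal `SL₂(ℤ)` action, and
contains infinitely many distinct invariant subtori of the form
`{(z_h,z_v) : a z_h + b z_v ≡ 0}`, then `Y = T⁴`. -/
theorem stmt8
    (Y : Set ((AddCircle (1 : ℝ) × AddCircle (1 : ℝ)) ×
              (AddCircle (1 : ℝ) × AddCircle (1 : ℝ))))
    (hclosed : IsClosed Y)
    (hinv : ∀ e f g h : ℤ, e * h - f * g = 1 →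
      ∀ p ∈ Y, ((torusLin e f g h p.1, torusLin e f g h p.2)) ∈ Y)
    (htori : {S : Set ((AddCircle (1 : ℝ) × AddCircle (1 : ℝ)) ×
                       (AddCircle (1 : ℝ) × AddCircle (1 : ℝ))) |
        S ⊆ Y ∧ ∃ a b : ℤ, ¬ (a = 0 ∧ b = 0) ∧
          S = {p | a • p.1 + b • p.2 = 0}}.Infinite) :
    Y = Set.univ :=
  stmt8_general Y hclosed htori
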